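/- Let W be a complex vector space, let A be a set of complex numbers, and suppose W is the internal direct sum of a family of subspaces (W_α)_{α ∈ A}. Let g be a linear automorphism of W with g(W_α) ⊆ W_α for each α ∈ A, such that for every α ∈ A and every w ∈ W_α there is Λ ∈ ℕ with (g − e^{2πiα}·id)^Λ w = 0. Let E be the endomorphism of W determined by E w = e^{−2πiα}·w for w ∈ W_α, and let S be the endomorphism determined by S w = α·w for w ∈ W_α. Then there exists an endomorphism N of W such that: (i) N(W_α) ⊆ W_α for every α; (ii) N is locally nilpotent; (iii) S ∘ N = N ∘ S; (iv) for every w ∈ W there is J₀ ∈ ℕ such that for all J ≥ J₀, N w = (2πi)^{−1} · Σ_{j=1}^{J} ((−1)^{j+1}/j) · (E ∘ g − id)^j w; and (v) for every α ∈ A and w ∈ W_α there is K₀ ∈ ℕ such that for all K ≥ K₀, g w = e^{2πiα} · Σ_{k=0}^{K} ((2πi)^k/k!) · N^k w. In other words, g = e^{2πiS} e^{2πiN} with S semisimple, N locally nilpotent, and S, N commuting. -/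
import Mathlib

open scoped BigOperators
open Polynomial Finset

noncomputable def Lpoly (m : ℕ) : Polynomial ℂ :=
  ∑ j ∈ Finset.Icc 1 m, C ((-1:ℂ)^(j+1)/j) * X^j

lemma Lpoly_eq_X_mul (m : ℕ) :
    Lpoly m = X * ∑ j ∈ Finset.Icc 1 m, C ((-1:ℂ)^(j+1)/j) * X^(j-1) := by
  rw [Lpoly, Finset.mul_sum]
  refine Finset.sum_congr rfl fun j hj => ?_
  obtain ⟨h1, _⟩ := Finset.mem_Icc.mp hj
  rw [mul_left_comm, ← pow_succ']
  congr 2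
  omega

lemma X_dvd_Lpoly (m : ℕ) : X ∣ Lpoly m := ⟨_, Lpoly_eq_X_mul m⟩

lemma deriv_Lpoly (m : ℕ) :
    (1 + X) * derivative (Lpoly m) = 1 - (-X)^m := by
  have h1 : derivative (Lpoly m) = ∑ i ∈ Finset.range m, (-X)^i := by
    rw [Lpoly, map_sum]
    rw [Finset.sum_bij (fun (j : ℕ) (hj : j ∈ Finset.Icc 1 m) => j - 1)]
    · intro j hj
      obtain ⟨h1, h2⟩ := Finset.mem_Icc.mp hj
      simp only [Finset.mem_range]; omega
    · intro a ha b hb h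
      obtain ⟨h1, _⟩ := Finset.mem_Icc.mp ha
      obtain ⟨h2, _⟩ := Finset.mem_Icc.mp hb
      omega
    · intro i hi
      exact ⟨i + 1, Finset.mem_Icc.mpr ⟨by omega, by simpa using Finset.mem_range.mp hi⟩, by omega⟩
    · intro j hj
      obtain ⟨h1, _⟩ := Finset.mem_Icc.mp hj
      rw [derivative_C_mul, derivative_X_pow]
      have hj0 : (j : ℂ) ≠ 0 := Nat.cast_ne_zero.mpr (by omega)
      have hc : ((-1:ℂ)^(j+1)/j) * j = (-1)^(j-1) := by
        field_simp
        rw [show j+1 = (j-1)+2 by omega, pow_add]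
        ring
      calc C ((-1:ℂ)^(j+1)/j) * (C (j:ℂ) * X^(j-1))
          = C (((-1:ℂ)^(j+1)/j) * j) * X^(j-1) := by rw [C_mul]; ring
        _ = C ((-1:ℂ)^(j-1)) * X^(j-1) := by rw [hc]
        _ = (-X)^(j-1) := by
              rw [show ((-X:Polynomial ℂ))^(j-1) = C ((-1:ℂ)^(j-1)) * X^(j-1) by
                rw [map_pow, map_neg, map_one, neg_pow]]
  rw [h1]
  linear_combination -geom_sum_mul (-X : Polynomial ℂ) m

noncomputable def Fpoly (m K : ℕ) : Polynomial ℂ :=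
  ∑ k ∈ Finset.range (K+1), C ((k.factorial : ℂ)⁻¹) * (Lpoly m)^k

lemma deriv_Fpoly (m K : ℕ) :
    derivative (Fpoly m (K+1)) = derivative (Lpoly m) * Fpoly m K := by
  rw [Fpoly, Finset.sum_range_succ', derivative_add, map_sum]
  have h0 : derivative (C (((Nat.factorial 0 : ℕ) : ℂ)⁻¹) * (Lpoly m)^0) = 0 := by simp
  rw [h0, add_zero, Fpoly, Finset.mul_sum]
  refine Finset.sum_congr rfl fun k _ => ?_
  rw [derivative_C_mul, derivative_pow]
  have hfac : ((k+1).factorial : ℂ)⁻¹ * (k+1 : ℕ) = (k.factorial : ℂ)⁻¹ := by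
    rw [Nat.factorial_succ]
    push_cast
    have h1 : ((k:ℂ)+1) ≠ 0 := Nat.cast_add_one_ne_zero k
    have h2 : (k.factorial : ℂ) ≠ 0 := Nat.cast_ne_zero.mpr k.factorial_ne_zero
    field_simp
  calc C (((k+1).factorial : ℂ)⁻¹) * (C ((k+1 : ℕ) : ℂ) * Lpoly m ^ (k+1-1) * derivative (Lpoly m))
      = C (((k+1).factorial : ℂ)⁻¹ * ((k+1:ℕ) : ℂ)) * Lpoly m ^ k * derivative (Lpoly m) := by
        simp only [Nat.add_sub_cancel]
        rw [C_mul]; ring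
    _ = derivative (Lpoly m) * (C ((k.factorial : ℂ)⁻¹) * Lpoly m ^ k) := by
        rw [hfac]; ring

lemma coeff_zero_Fpoly (m K : ℕ) : (Fpoly m K).coeff 0 = 1 := by
  rw [Fpoly, finset_sum_coeff]
  rw [Finset.sum_eq_single 0]
  · simp
  · intro k _ hk
    have hd : X ∣ C ((k.factorial : ℂ)⁻¹) * (Lpoly m)^k :=
      Dvd.dvd.mul_left (dvd_pow (X_dvd_Lpoly m) hk) _
    exact (X_dvd_iff.mp hd)
  · intro h; simp at h

lemma key_dvd (m K : ℕ) (hm : 1 ≤ m) (hK : m ≤ K) :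
    (X : Polynomial ℂ)^m ∣ Fpoly m K - (1 + X) := by
  set D : Polynomial ℂ := Fpoly m K - (1 + X) with hD
  -- step 1: X^m ∣ D - (1+X) * derivative D
  have hstep : (X : Polynomial ℂ)^m ∣ D - (1 + X) * derivative D := by
    obtain ⟨K', rfl⟩ : ∃ K', K = K' + 1 := ⟨K - 1, by omega⟩
    have hdD : derivative D = derivative (Lpoly m) * Fpoly m K' - 1 := by
      rw [hD, derivative_sub, deriv_Fpoly, derivative_add, derivative_one, derivative_X, zero_add]
    have hFK : Fpoly m (K'+1) = Fpoly m K' + C (((K'+1).factorial : ℂ)⁻¹) * (Lpoly m)^(K'+1) := by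
      rw [Fpoly, Fpoly, Finset.sum_range_succ]
    have : D - (1 + X) * derivative D
        = C (((K'+1).factorial : ℂ)⁻¹) * (Lpoly m)^(K'+1) + (-X)^m * Fpoly m K' := by
      rw [hD, hdD, hFK, mul_sub, ← mul_assoc, deriv_Lpoly]; ring
    rw [this]
    refine dvd_add (Dvd.dvd.mul_left ?_ _) (Dvd.dvd.mul_right ?_ _)
    · exact dvd_trans (pow_dvd_pow X (by omega)) (pow_dvd_pow_of_dvd (X_dvd_Lpoly m) (K'+1))
    · rw [neg_pow]
      exact Dvd.dvd.mul_left dvd_rfl _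
  have hcong : ∀ n < m, ((1 + X) * derivative D).coeff n = D.coeff n := by
    intro n hn
    have := (X_pow_dvd_iff.mp hstep) n hn
    rw [coeff_sub, sub_eq_zero] at this
    exact this.symm
  have h0 : D.coeff 0 = 0 := by
    rw [hD, coeff_sub, coeff_zero_Fpoly]
    simp
  have main : ∀ n, n < m → D.coeff n = 0 := by
    intro n
    induction n with
    | zero => exact fun _ => h0
    | succ n ih =>
      intro hn
      have hdn : D.coeff n = 0 := ih (by omega)
      have hc := hcong n (by omega)
      have e1 : ((1 + X) * derivative D).coeff n
          = (derivative D).coeff n + (X * derivative D).coeff n := by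
        rw [add_mul, one_mul, coeff_add]
      have e2 : (X * derivative D).coeff n = 0 := by
        cases n with
        | zero => simp [mul_coeff_zero]
        | succ k =>
          rw [coeff_X_mul, coeff_derivative, hdn]
          simp
      have e3 : (derivative D).coeff n = D.coeff (n+1) * (n+1) := coeff_derivative D n
      rw [e1, e2, e3, hdn, add_zero] at hc
      have hne : ((n:ℂ)+1) ≠ 0 := by
        have := Nat.cast_add_one_ne_zero (R := ℂ) n
        exact_mod_cast this
      rcases mul_eq_zero.mp hc with hc | hc
      · exact hc
      · exact absurd hc hne
  exact X_pow_dvd_iff.mpr main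


section Ops

variable {W : Type*} [AddCommGroup W] [Module ℂ W] (T : Module.End ℂ W)

lemma pow_apply_zero_mono {w : W} {a b : ℕ} (hab : a ≤ b) (h : (T^a) w = 0) :
    (T^b) w = 0 := by
  have : T^b = T^(b-a) * T^a := by rw [← pow_add]; congr 1; omega
  rw [this, Module.End.mul_apply, h, map_zero]

lemma aeval_pow_comm (p : Polynomial ℂ) (m : ℕ) (w : W) :
    (T^m) ((Polynomial.aeval T p) w) = (Polynomial.aeval T p) ((T^m) w) := by
  have h1 : Polynomial.aeval T ((X : Polynomial ℂ)^m) = (T^m : Module.End ℂ W) := by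
    rw [map_pow, Polynomial.aeval_X]
  have h2 : T^m * Polynomial.aeval T p = Polynomial.aeval T p * T^m := by
    rw [← h1, ← map_mul, ← map_mul, mul_comm]
  calc (T^m) ((Polynomial.aeval T p) w) = (T^m * Polynomial.aeval T p) w := rfl
    _ = (Polynomial.aeval T p * T^m) w := by rw [h2]
    _ = (Polynomial.aeval T p) ((T^m) w) := rfl

lemma aeval_Lpoly_apply (m : ℕ) (w : W) :
    (Polynomial.aeval T (Lpoly m)) w
      = ∑ j ∈ Finset.Icc 1 m, ((-1:ℂ)^(j+1)/j) • ((T^j) w) := by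
  rw [Lpoly, map_sum, LinearMap.coe_sum, Finset.sum_apply]
  refine Finset.sum_congr rfl fun j _ => ?_
  rw [map_mul, Polynomial.aeval_C, map_pow, Polynomial.aeval_X, Module.End.mul_apply,
    Module.algebraMap_end_apply]

end Ops

/-- on a direct sum `W = ⨁_{α ∈ A} W_α` on which `g - e^{2πiα}` is locally
nilpotent on `W_α`, there is a locally nilpotent `N`, preserving each `W_α` and commuting
with the semisimple operator `S` (acting as `α` on `W_α`), given by the logarithm series
`N = (2πi)⁻¹ log(1 + (E∘g - 1))`, such that `g = e^{2πiS} e^{2πiN}`. -/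
theorem stmt4 {W : Type*} [AddCommGroup W] [Module ℂ W] (A : Set ℂ)
    (Wa : A → Submodule ℂ W) (hdecomp : DirectSum.IsInternal Wa)
    (g : W ≃ₗ[ℂ] W) (hg : ∀ α : A, ∀ w ∈ Wa α, g w ∈ Wa α)
    (hnil : ∀ α : A, ∀ w ∈ Wa α, ∃ Λ : ℕ,
      (((g : Module.End ℂ W) - Complex.exp (2 * Real.pi * Complex.I * (α : ℂ)) •
        (1 : Module.End ℂ W)) ^ Λ) w = 0)
    (E : Module.End ℂ W)
    (hE : ∀ α : A, ∀ w ∈ Wa α, E w = Complex.exp (-(2 * Real.pi * Complex.I * (α : ℂ))) • w)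
    (S : Module.End ℂ W)
    (hS : ∀ α : A, ∀ w ∈ Wa α, S w = (α : ℂ) • w) :
    ∃ N : Module.End ℂ W,
      (∀ α : A, ∀ w ∈ Wa α, N w ∈ Wa α) ∧
      (∀ w : W, ∃ k : ℕ, (N ^ k) w = 0) ∧
      S * N = N * S ∧
      (∀ w : W, ∃ J₀ : ℕ, ∀ J : ℕ, J₀ ≤ J →
        N w = (2 * Real.pi * Complex.I : ℂ)⁻¹ •
          ∑ j ∈ Finset.Icc 1 J, (((-1 : ℂ) ^ (j + 1) / (j : ℂ)) •
            (((E * (g : Module.End ℂ W) - 1) ^ j) w))) ∧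
      (∀ α : A, ∀ w ∈ Wa α, ∃ K₀ : ℕ, ∀ K : ℕ, K₀ ≤ K →
        g w = Complex.exp (2 * Real.pi * Complex.I * (α : ℂ)) •
          ∑ k ∈ Finset.range (K + 1),
            (((2 * Real.pi * Complex.I : ℂ) ^ k / (Nat.factorial k : ℂ)) • ((N ^ k) w))) := by
  classical
  set c : ℂ := 2 * Real.pi * Complex.I with hc
  have hc0 : c ≠ 0 := by
    refine mul_ne_zero (mul_ne_zero two_ne_zero ?_) Complex.I_ne_zero
    exact_mod_cast Complex.ofReal_ne_zero.mpr Real.pi_ne_zero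
  set T : Module.End ℂ W := E * (g : Module.End ℂ W) - 1 with hT
  -- T applied
  have hTapp : ∀ w : W, T w = E (g w) - w := by
    intro w
    rw [hT]
    simp [LinearMap.sub_apply, Module.End.mul_apply]
  -- T preserves each Wa α
  have hTmem : ∀ α : A, ∀ w ∈ Wa α, T w ∈ Wa α := by
    intro α w hw
    rw [hTapp]
    refine Submodule.sub_mem _ ?_ hw
    rw [hE α _ (hg α w hw)]
    exact Submodule.smul_mem _ _ (hg α w hw)
  have hTpowmem : ∀ α : A, ∀ j : ℕ, ∀ w ∈ Wa α, (T^j) w ∈ Wa α := by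
    intro α j
    induction j with
    | zero => intro w hw; simpa using hw
    | succ j ih =>
      intro w hw
      rw [pow_succ, Module.End.mul_apply]
      exact ih _ (hTmem α w hw)
  -- local nilpotency of T on Wa α
  have hTnilWa : ∀ α : A, ∀ w ∈ Wa α, ∃ m : ℕ, (T^m) w = 0 := by
    intro α w hw
    obtain ⟨Λ, hΛ⟩ := hnil α w hw
    set G : Module.End ℂ W :=
      (g : Module.End ℂ W) - Complex.exp (c * α) • 1 with hG
    have hGmem : ∀ v ∈ Wa α, G v ∈ Wa α := by
      intro v hv
      rw [hG]
      simp only [LinearMap.sub_apply, LinearMap.smul_apply, Module.End.one_apply]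
      exact Submodule.sub_mem _ (hg α v hv) (Submodule.smul_mem _ _ hv)
    have hGpowmem : ∀ j : ℕ, ∀ v ∈ Wa α, (G^j) v ∈ Wa α := by
      intro j
      induction j with
      | zero => intro v hv; simpa using hv
      | succ j ih =>
        intro v hv
        rw [pow_succ, Module.End.mul_apply]
        exact ih _ (hGmem v hv)
    have hTv : ∀ v ∈ Wa α, T v = Complex.exp (-(c * α)) • (G v) := by
      intro v hv
      rw [hTapp, hE α _ (hg α v hv), hG]
      simp only [LinearMap.sub_apply, LinearMap.smul_apply, Module.End.one_apply]
      rw [smul_sub, smul_smul, ← Complex.exp_add, neg_add_cancel, Complex.exp_zero, one_smul]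
      rfl
    have hkey : ∀ j : ℕ, ∀ v ∈ Wa α, (T^j) v = (Complex.exp (-(c * α)))^j • ((G^j) v) := by
      intro j
      induction j with
      | zero => intro v hv; simp
      | succ j ih =>
        intro v hv
        rw [pow_succ, Module.End.mul_apply, hTv v hv, map_smul, ih _ (hGmem v hv),
          smul_smul, pow_succ G j, Module.End.mul_apply,
          mul_comm (Complex.exp (-(c * (α:ℂ)))) (Complex.exp (-(c * (α:ℂ))) ^ j), ← pow_succ]
    exact ⟨Λ, by rw [hkey Λ w hw, hΛ, smul_zero]⟩
  -- local nilpotency of T everywhere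
  have hV : ∀ w : W, ∃ m : ℕ, (T^m) w = 0 := by
    let V : Submodule ℂ W :=
      { carrier := {w | ∃ m : ℕ, (T^m) w = 0}
        add_mem' := by
          rintro x y ⟨a, ha⟩ ⟨b, hb⟩
          exact ⟨max a b, by
            rw [map_add, pow_apply_zero_mono T (le_max_left a b) ha,
              pow_apply_zero_mono T (le_max_right a b) hb, add_zero]⟩
        zero_mem' := ⟨0, by simp⟩
        smul_mem' := by
          rintro r x ⟨a, ha⟩
          exact ⟨a, by rw [map_smul, ha, smul_zero]⟩ }
    have htop : (⊤ : Submodule ℂ W) ≤ V := by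
      rw [← hdecomp.submodule_iSup_eq_top]
      exact iSup_le fun α w hw => hTnilWa α w hw
    exact fun w => htop (Submodule.mem_top)
  choose nn hnn using hV
  set sumE : ℕ → W → W :=
    fun J w => ∑ j ∈ Finset.Icc 1 J, (((-1:ℂ)^(j+1)/j) • ((T^j) w)) with hsumE
  have stab : ∀ (w : W) (m J : ℕ), (T^m) w = 0 → m ≤ J → sumE J w = sumE m w := by
    intro w m J hm hmJ
    refine (Finset.sum_subset (Finset.Icc_subset_Icc_right hmJ) ?_).symm
    intro j hj hj'
    have h1 : m < j := by
      simp only [Finset.mem_Icc] at hj hj'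
      omega
    rw [pow_apply_zero_mono T (le_of_lt h1) hm, smul_zero]
  have Neq0 : ∀ (w : W) (J : ℕ), (T^J) w = 0 →
      c⁻¹ • sumE (nn w) w = c⁻¹ • sumE J w := by
    intro w J hJ
    have h1 : sumE (max J (nn w)) w = sumE (nn w) w :=
      stab w (nn w) _ (hnn w) (le_max_right _ _)
    have h2 : sumE (max J (nn w)) w = sumE J w :=
      stab w J _ hJ (le_max_left _ _)
    rw [← h1, h2]
  set N : Module.End ℂ W :=
    { toFun := fun w => c⁻¹ • sumE (nn w) w
      map_add' := by
        intro x y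
        set M : ℕ := max (nn x) (max (nn y) (nn (x+y))) with hM
        rw [Neq0 x M (pow_apply_zero_mono T (le_max_left _ _) (hnn x)),
          Neq0 y M (pow_apply_zero_mono T (le_trans (le_max_left _ _) (le_max_right _ _)) (hnn y)),
          Neq0 (x+y) M (pow_apply_zero_mono T (le_trans (le_max_right _ _) (le_max_right _ _)) (hnn (x+y)))]
        rw [hsumE]
        simp only [map_add, smul_add, ← Finset.sum_add_distrib, ← smul_add]
      map_smul' := by
        intro r x
        set M : ℕ := max (nn x) (nn (r • x)) with hM
        rw [Neq0 x M (pow_apply_zero_mono T (le_max_left _ _) (hnn x)),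
          Neq0 (r • x) M (pow_apply_zero_mono T (le_max_right _ _) (hnn (r • x)))]
        rw [hsumE, RingHom.id_apply]
        simp only [map_smul, Finset.smul_sum, smul_comm r]
        } with hN
  have hNapp : ∀ w : W, N w = c⁻¹ • sumE (nn w) w := fun w => rfl
  have NeqJ : ∀ (w : W) (J : ℕ), (T^J) w = 0 → N w = c⁻¹ • sumE J w := by
    intro w J hJ
    rw [hNapp, Neq0 w J hJ]
  -- N in terms of aeval of Lpoly
  have NQ : ∀ (m : ℕ) (w : W), (T^m) w = 0 →
      N w = c⁻¹ • (Polynomial.aeval T (Lpoly m)) w := by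
    intro m w hm
    rw [NeqJ w m hm, aeval_Lpoly_apply, hsumE]
  have Npow : ∀ (m : ℕ) (w : W), (T^m) w = 0 → ∀ k : ℕ,
      (N^k) w = (c⁻¹)^k • (Polynomial.aeval T ((Lpoly m)^k)) w := by
    intro m w hm k
    induction k with
    | zero => simp
    | succ k ih =>
      have hv : (T^m) ((Polynomial.aeval T ((Lpoly m)^k)) w) = 0 := by
        rw [aeval_pow_comm, hm, map_zero]
      rw [pow_succ', Module.End.mul_apply, ih, map_smul, NQ m _ hv, smul_smul,
        ← Module.End.mul_apply (Polynomial.aeval T (Lpoly m)), ← map_mul, ← pow_succ']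
      rw [pow_succ c⁻¹ k]
  -- N preserves each Wa α
  have NmemWa : ∀ α : A, ∀ w ∈ Wa α, N w ∈ Wa α := by
    intro α w hw
    rw [hNapp, hsumE]
    refine Submodule.smul_mem _ _ (Submodule.sum_mem _ fun j _ => ?_)
    exact Submodule.smul_mem _ _ (hTpowmem α j w hw)
  refine ⟨N, NmemWa, ?_, ?_, ?_, ?_⟩
  · -- local nilpotency of N
    intro w
    refine ⟨nn w, ?_⟩
    rw [Npow (nn w) w (hnn w) (nn w)]
    have h1 : (Lpoly (nn w))^(nn w)
        = (∑ j ∈ Finset.Icc 1 (nn w), C ((-1:ℂ)^(j+1)/j) * X^(j-1))^(nn w) * X^(nn w) := by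
      rw [Lpoly_eq_X_mul, mul_pow]; ring
    rw [h1, map_mul, Module.End.mul_apply, Polynomial.aeval_X_pow, hnn w, map_zero, smul_zero]
  · -- commuting with S
    have hker : ∀ α : A, Wa α ≤ LinearMap.ker (S * N - N * S) := by
      intro α w hw
      rw [LinearMap.mem_ker, LinearMap.sub_apply, Module.End.mul_apply, Module.End.mul_apply]
      have h1 : S (N w) = (α:ℂ) • N w := hS α _ (NmemWa α w hw)
      have h2 : N (S w) = (α:ℂ) • N w := by rw [hS α w hw, map_smul]
      rw [h1, h2, sub_self]
    have htop : (⊤ : Submodule ℂ W) ≤ LinearMap.ker (S * N - N * S) := by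
      rw [← hdecomp.submodule_iSup_eq_top]
      exact iSup_le hker
    have hzero : S * N - N * S = 0 := by
      ext w
      simpa using LinearMap.mem_ker.mp (htop (Submodule.mem_top))
    exact sub_eq_zero.mp hzero
  · -- logarithm series
    intro w
    refine ⟨nn w, fun J hJ => ?_⟩
    rw [NeqJ w J (pow_apply_zero_mono T hJ (hnn w)), hsumE]
  · -- exponential series
    intro α w hw
    obtain ⟨m₀, hm₀⟩ := hTnilWa α w hw
    set m : ℕ := max m₀ 1 with hm'
    have hm : (T^m) w = 0 := pow_apply_zero_mono T (le_max_left _ _) hm₀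
    have hm1 : 1 ≤ m := le_max_right _ _
    refine ⟨m, fun K hK => ?_⟩
    have hterm : ∀ k : ℕ, (c^k / (Nat.factorial k : ℂ)) • ((N^k) w)
        = ((Nat.factorial k : ℂ))⁻¹ • (Polynomial.aeval T ((Lpoly m)^k)) w := by
      intro k
      rw [Npow m w hm k, smul_smul]
      congr 1
      rw [div_eq_mul_inv, inv_pow, mul_right_comm, mul_inv_cancel₀ (pow_ne_zero k hc0), one_mul]
    have hsum : ∑ k ∈ Finset.range (K + 1), ((c^k / (Nat.factorial k : ℂ)) • ((N^k) w))
        = (Polynomial.aeval T (Fpoly m K)) w := by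
      rw [Fpoly, map_sum, LinearMap.coe_sum, Finset.sum_apply]
      refine Finset.sum_congr rfl fun k _ => ?_
      rw [hterm k, map_mul, Polynomial.aeval_C, Module.End.mul_apply, Module.algebraMap_end_apply]
    obtain ⟨R, hR⟩ := key_dvd m K hm1 hK
    have hF : (Polynomial.aeval T (Fpoly m K)) w = w + T w := by
      have hFeq : Fpoly m K = 1 + X + R * X^m := by
        linear_combination hR
      rw [hFeq, map_add, map_add, map_one, map_mul, Polynomial.aeval_X, Polynomial.aeval_X_pow]
      simp only [LinearMap.add_apply, Module.End.mul_apply, Module.End.one_apply]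
      rw [hm, map_zero, add_zero]
    have hEg : w + T w = Complex.exp (-(c * (α:ℂ))) • (g w) := by
      rw [hTapp, hE α _ (hg α w hw)]
      abel
    rw [hsum, hF, hEg, smul_smul, ← Complex.exp_add, add_neg_cancel, Complex.exp_zero, one_smul]
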